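/- arXiv:0704.2328 — 5 statements merged into one kernel-verified Lean document; each statement's English description precedes it below -/
import Mathlib

section
/- Let X be a connected and locally arcwise connected metric space and let A, B, C ⊆ X be closed and nonempty sets with A ∩ B = ∅. Then C cuts the arcs between A and B if and only if there exists a continuous function f : X → ℝ such that f(x) ≤ 0 for all x ∈ A, f(x) ≥ 0 for all x ∈ B, and C = {x ∈ X : f(x) = 0}. -/
/-!
Let `P` be the set of points joined to `A` by a path avoiding `C`. In a locally path connected
space `P` is open and closed in the open set `Cᶜ`, so the distance to `C`, taken negative on `P`
and positive elsewhere, is continuous; it vanishes exactly on `C` and is `≤ 0` on `A`. If `C`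
cuts the arcs between `A` and `B`, then `P` misses `B`, so this function is `≥ 0` on `B`.
Conversely, along a path from `A` to `B` such a function changes sign, so by the intermediate
value theorem the path meets its zero set.
-/

/-- `C` cuts the arcs between `A` and `B` in the space `X`: every path in `X`
whose range meets both `A` and `B` has range meeting `C`. -/
def CutsArcs {X : Type*} [TopologicalSpace X] (A B C : Set X) : Prop :=
  ∀ γ : C(unitInterval, X),
    (Set.range γ ∩ A).Nonempty → (Set.range γ ∩ B).Nonempty →
    (Set.range γ ∩ C).Nonempty

open Set Metric

theorem isOpen_diff_biUnion_pathComponentIn {X : Type*} [TopologicalSpace X]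
    [LocallyPathConnectedSpace X] {U : Set X} (hU : IsOpen U) (A : Set X) :
    IsOpen (U \ ⋃ a ∈ A, pathComponentIn U a) := by
  refine isOpen_iff_forall_mem_open.mpr fun x ⟨hxU, hxP⟩ ↦
    ⟨pathComponentIn U x, fun z hz ↦ ⟨hz.target_mem, fun hzP ↦ hxP ?_⟩,
      hU.pathComponentIn x, mem_pathComponentIn_self hxU⟩
  obtain ⟨a, ha, haz⟩ := mem_iUnion₂.mp hzP
  exact mem_iUnion₂.mpr ⟨a, ha, JoinedIn.trans haz hz.symm⟩

theorem frontier_subset_of_isOpen_compl_diff {X : Type*} [TopologicalSpace X] {P C : Set X}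
    (hP : IsOpen P) (hCP : IsOpen (Cᶜ \ P)) : frontier P ⊆ C := by
  rw [hP.frontier_eq]
  rintro x ⟨hx_cl, hxP⟩
  by_contra hxC
  obtain ⟨y, hyCP, hyP⟩ := mem_closure_iff.mp hx_cl _ hCP ⟨hxC, hxP⟩
  exact hyCP.2 hyP

theorem continuous_piecewise_neg_infDist {X : Type*} [MetricSpace X] {P C : Set X}
    [DecidablePred (· ∈ P)] (hP : IsOpen P) (hCP : IsOpen (Cᶜ \ P)) :
    Continuous (P.piecewise (fun x ↦ -infDist x C) (infDist · C)) := by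
  refine (continuous_infDist_pt C).neg.piecewise (fun x hx ↦ ?_) (continuous_infDist_pt C)
  rw [infDist_zero_of_mem (frontier_subset_of_isOpen_compl_diff hP hCP hx), neg_zero]

theorem CutsArcs.not_joinedIn_compl {X : Type*} [TopologicalSpace X] {A B C : Set X}
    (h : CutsArcs A B C) {a b : X} (ha : a ∈ A) (hb : b ∈ B) : ¬JoinedIn Cᶜ a b := by
  rintro ⟨γ, hγ⟩
  obtain ⟨_, ⟨t, rfl⟩, hγt⟩ :=
    h γ.toContinuousMap ⟨a, ⟨0, γ.source⟩, ha⟩ ⟨b, ⟨1, γ.target⟩, hb⟩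
  exact hγ t hγt

theorem cutsArcs_setOf_eq_zero {X : Type*} [TopologicalSpace X] {A B : Set X} {f : X → ℝ}
    (hf : Continuous f) (hfA : ∀ x ∈ A, f x ≤ 0) (hfB : ∀ x ∈ B, 0 ≤ f x) :
    CutsArcs A B {x | f x = 0} := by
  rintro γ ⟨_, ⟨s, rfl⟩, hs⟩ ⟨_, ⟨t, rfl⟩, ht⟩
  obtain ⟨u, hu⟩ := intermediate_value_univ s t (hf.comp γ.continuous) ⟨hfA _ hs, hfB _ ht⟩
  exact ⟨γ u, ⟨u, rfl⟩, hu⟩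

theorem CutsArcs.exists_continuous_setOf_eq_zero {X : Type*} [MetricSpace X]
    [LocallyPathConnectedSpace X] {A B C : Set X} (hC : IsClosed C) (hCne : C.Nonempty)
    (h : CutsArcs A B C) :
    ∃ f : X → ℝ, Continuous f ∧ (∀ x ∈ A, f x ≤ 0) ∧ (∀ x ∈ B, 0 ≤ f x) ∧
      C = {x : X | f x = 0} := by
  classical
  set P := ⋃ a ∈ A, pathComponentIn Cᶜ a
  have hP : IsOpen P := isOpen_biUnion fun a _ ↦ hC.isOpen_compl.pathComponentIn a
  have hCP : IsOpen (Cᶜ \ P) := isOpen_diff_biUnion_pathComponentIn hC.isOpen_compl A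
  refine ⟨P.piecewise (fun x ↦ -infDist x C) (infDist · C),
    continuous_piecewise_neg_infDist hP hCP, fun x hx ↦ ?_, fun x hx ↦ ?_, ?_⟩
  · by_cases hxP : x ∈ P
    · simpa [hxP] using infDist_nonneg
    · have hxC : x ∈ C := by_contra fun hxC ↦
        hxP (mem_biUnion hx (mem_pathComponentIn_self hxC))
      simp [hxP, infDist_zero_of_mem hxC]
  · have hxP : x ∉ P := by
      simp only [P, mem_iUnion₂, not_exists]
      exact fun a ha ↦ h.not_joinedIn_compl ha hx
    simp [hxP, infDist_nonneg]
  · ext x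
    rw [hC.mem_iff_infDist_zero hCne]
    by_cases hxP : x ∈ P <;> simp [hxP]

theorem stmt0_general {X : Type*} [MetricSpace X] [LocallyPathConnectedSpace X]
    (A B C : Set X) (hC : IsClosed C) (hCne : C.Nonempty) :
    CutsArcs A B C ↔
      ∃ f : X → ℝ, Continuous f ∧ (∀ x ∈ A, f x ≤ 0) ∧ (∀ x ∈ B, 0 ≤ f x) ∧
        C = {x : X | f x = 0} := by
  refine ⟨CutsArcs.exists_continuous_setOf_eq_zero hC hCne, ?_⟩
  rintro ⟨f, hf, hfA, hfB, rfl⟩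
  exact cutsArcs_setOf_eq_zero hf hfA hfB

theorem stmt0 {X : Type*} [MetricSpace X] [ConnectedSpace X] [LocallyPathConnectedSpace X]
    (A B C : Set X) (hA : IsClosed A) (hB : IsClosed B) (hC : IsClosed C)
    (hAne : A.Nonempty) (hBne : B.Nonempty) (hCne : C.Nonempty)
    (hAB : A ∩ B = ∅) :
    CutsArcs A B C ↔
      ∃ f : X → ℝ, Continuous f ∧ (∀ x ∈ A, f x ≤ 0) ∧ (∀ x ∈ B, 0 ≤ f x) ∧
        C = {x : X | f x = 0} :=
  stmt0_general A B C hC hCne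
end

section
/- Let X be a connected and locally arcwise connected metric space and let A, B ⊆ X be closed and nonempty sets with A ∩ B = ∅. Then the sides S(A) and S(B) are closed subsets of X and S(A) ∩ S(B) = ∅. -/
/-- The side of `A` in `X` (relative to `B`): the set of points `x` such that every
path starting at `x` and ending in `B` has range meeting `A`. -/
def sideOf {X : Type*} [TopologicalSpace X] (A B : Set X) : Set X :=
  {x : X | ∀ γ : C(unitInterval, X), γ 0 = x → γ 1 ∈ B →
    (Set.range γ ∩ A).Nonempty}

/-!
A path from a point to `B` that avoids `A` can be prolonged backwards through a path-connected
neighbourhood avoiding the closed set `A`, so the complement of each side is open. If `x` lay on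
both sides, follow a path from `x` to `B` only up to its first hitting time of the closed set
`A ∪ B`: this subpath ends in `A` or in `B` and meets `A ∪ B` nowhere else, so one of the two
side conditions forces its endpoint into `A ∩ B`.
-/

open Set

section

variable {X : Type*} [TopologicalSpace X] {A B : Set X}

theorem mem_sideOf_iff {x : X} :
    x ∈ sideOf A B ↔ ∀ y ∈ B, ∀ γ : Path x y, ¬Disjoint (range γ) A := by
  simp only [sideOf, mem_ofPred_eq, not_disjoint_iff_nonempty_inter]
  refine ⟨fun h y hy γ => h γ.toContinuousMap γ.source (by simpa using hy), fun h γ h0 h1 => ?_⟩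
  exact h _ h1 ⟨γ, h0, rfl⟩

theorem isClosed_sideOf [LocallyPathConnectedSpace X] (hA : IsClosed A) (B : Set X) :
    IsClosed (sideOf A B) := by
  refine isOpen_compl_iff.1 (isOpen_iff_mem_nhds.2 fun x hx => ?_)
  rw [mem_compl_iff, mem_sideOf_iff] at hx
  push Not at hx
  obtain ⟨y, hy, γ, hγ⟩ := hx
  have hxA : x ∉ A := hγ.notMem_of_mem_left ⟨0, γ.source⟩
  obtain ⟨U, ⟨hUo, hxU, hU⟩, hUA⟩ :=
    (isOpen_isPathConnected_basis x).mem_iff.1 (hA.isOpen_compl.mem_nhds hxA)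
  refine Filter.mem_of_superset (hUo.mem_nhds hxU) fun x' hx' => ?_
  obtain ⟨p, hp⟩ := hU.joinedIn x' hx' x hxU
  rw [mem_compl_iff, mem_sideOf_iff]
  push Not
  refine ⟨y, hy, p.trans γ, ?_⟩
  rw [Path.trans_range]
  exact disjoint_union_left.2
    ⟨disjoint_compl_left.mono_left (range_subset_iff.2 fun t => hUA (hp t)), hγ⟩

/-- Stopping a path at its first visit to a closed set. -/
theorem Path.exists_range_inter_eq_singleton {C : Set X} (hC : IsClosed C) {x y : X}
    (γ : Path x y) (hy : y ∈ C) : ∃ z ∈ C, ∃ δ : Path x z, range δ ∩ C = {z} := by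
  obtain ⟨τ, hτC, hτ⟩ :=
    (hC.preimage γ.continuous).isCompact.exists_isLeast ⟨1, by simpa using hy⟩
  let δ : Path x (γ τ) := (γ.subpath 0 τ).cast γ.source.symm rfl
  refine ⟨γ τ, hτC, δ, Subset.antisymm ?_ (singleton_subset_iff.2 ⟨⟨1, δ.target⟩, hτC⟩)⟩
  have hδ : range δ = γ '' Icc 0 τ := γ.range_subpath_of_le 0 τ τ.2.1
  rintro _ ⟨hδt, htC⟩
  rw [hδ] at hδt
  obtain ⟨t, ht, rfl⟩ := hδt
  rw [le_antisymm ht.2 (hτ htC)]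
  rfl

theorem disjoint_sideOf_sideOf [PathConnectedSpace X] (hA : IsClosed A) (hB : IsClosed B)
    (hBne : B.Nonempty) (hAB : Disjoint A B) : Disjoint (sideOf A B) (sideOf B A) := by
  refine disjoint_left.2 fun x hxA hxB => ?_
  obtain ⟨b, hb⟩ := hBne
  obtain ⟨z, hz, δ, hδ⟩ :=
    (PathConnectedSpace.somePath x b).exists_range_inter_eq_singleton (hA.union hB) (Or.inr hb)
  have hz_of_mem {w : X} (hw : w ∈ range δ) (hwAB : w ∈ A ∪ B) : w = z :=
    (hδ.subset ⟨hw, hwAB⟩ :)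
  have hzAB : z ∈ A ∧ z ∈ B := by
    rcases hz with hzA | hzB
    · obtain ⟨w, hwδ, hwB⟩ := not_disjoint_iff.1 (mem_sideOf_iff.1 hxB z hzA δ)
      exact ⟨hzA, hz_of_mem hwδ (Or.inr hwB) ▸ hwB⟩
    · obtain ⟨w, hwδ, hwA⟩ := not_disjoint_iff.1 (mem_sideOf_iff.1 hxA z hzB δ)
      exact ⟨hz_of_mem hwδ (Or.inl hwA) ▸ hwA, hzB⟩
  exact disjoint_left.1 hAB hzAB.1 hzAB.2

end

theorem stmt1_general {X : Type*} [MetricSpace X] [ConnectedSpace X] [LocallyPathConnectedSpace X]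
    (A B : Set X) (hA : IsClosed A) (hB : IsClosed B)
    (hBne : B.Nonempty) (hAB : A ∩ B = ∅) :
    IsClosed (sideOf A B) ∧ IsClosed (sideOf B A) ∧
      sideOf A B ∩ sideOf B A = ∅ := by
  have : PathConnectedSpace X := pathConnectedSpace_iff_connectedSpace.2 ‹_›
  refine ⟨isClosed_sideOf hA B, isClosed_sideOf hB A, ?_⟩
  exact disjoint_iff_inter_eq_empty.1 <|
    disjoint_sideOf_sideOf hA hB hBne (disjoint_iff_inter_eq_empty.2 hAB)

theorem stmt1 {X : Type*} [MetricSpace X] [ConnectedSpace X] [LocallyPathConnectedSpace X]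
    (A B : Set X) (hA : IsClosed A) (hB : IsClosed B)
    (hAne : A.Nonempty) (hBne : B.Nonempty) (hAB : A ∩ B = ∅) :
    IsClosed (sideOf A B) ∧ IsClosed (sideOf B A) ∧
      sideOf A B ∩ sideOf B A = ∅ :=
  stmt1_general A B hA hB hBne hAB
end

section
/- Let X be a connected and locally arcwise connected metric space and let A, B ⊆ X be closed and nonempty sets with A ∩ B = ∅. Let Γ ⊆ X be a compact connected set with Γ ∩ A ≠ ∅ and Γ ∩ B ≠ ∅. Then: (i) for every ε > 0 there exists a path γ : [0,1] → X with γ(0) ∈ A, γ(1) ∈ B, and range of γ contained in B(Γ,ε) := {x ∈ X : dist(x,Γ) < ε}; (ii) if moreover X is locally compact and C ⊆ X is a closed set which cuts the arcs between A and B, then Γ ∩ C ≠ ∅. -/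
open Metric

theorem CutsArcs.range_inter_nonempty {X : Type*} [TopologicalSpace X] {A B C : Set X}
    (hcut : CutsArcs A B C) (γ : C(unitInterval, X)) (h0 : γ 0 ∈ A) (h1 : γ 1 ∈ B) :
    (Set.range γ ∩ C).Nonempty :=
  hcut γ ⟨γ 0, Set.mem_range_self _, h0⟩ ⟨γ 1, Set.mem_range_self _, h1⟩

theorem IsPreconnected.joinedIn_of_subset_isOpen {X : Type*} [TopologicalSpace X]
    [LocallyPathConnectedSpace X] {Γ U : Set X} (hΓ : IsPreconnected Γ) (hU : IsOpen U)
    (hΓU : Γ ⊆ U) {a b : X} (ha : a ∈ Γ) (hb : b ∈ Γ) : JoinedIn U a b := by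
  have hΓV : Γ ⊆ _root_.connectedComponentIn U a := hΓ.subset_connectedComponentIn ha hΓU
  have hV : IsPathConnected (_root_.connectedComponentIn U a) :=
    hU.connectedComponentIn.isConnected_iff_isPathConnected.mp
      (isConnected_connectedComponentIn_iff.mpr (hΓU ha))
  exact (hV.joinedIn a (hΓV ha) b (hΓV hb)).mono (connectedComponentIn_subset U a)

theorem IsPreconnected.exists_path_subset_thickening {X : Type*} [PseudoMetricSpace X]
    [LocallyPathConnectedSpace X] {A B Γ : Set X} (hΓ : IsPreconnected Γ)
    (hΓA : (Γ ∩ A).Nonempty) (hΓB : (Γ ∩ B).Nonempty) {ε : ℝ} (hε : 0 < ε) :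
    ∃ γ : C(unitInterval, X), γ 0 ∈ A ∧ γ 1 ∈ B ∧ Set.range γ ⊆ thickening ε Γ := by
  obtain ⟨a, haΓ, haA⟩ := hΓA
  obtain ⟨b, hbΓ, hbB⟩ := hΓB
  obtain ⟨γ, hγ⟩ := hΓ.joinedIn_of_subset_isOpen isOpen_thickening
    (self_subset_thickening hε Γ) haΓ hbΓ
  exact ⟨γ, by simpa using haA, by simpa using hbB, Set.range_subset_iff.mpr hγ⟩

theorem IsCompact.inter_nonempty_of_cutsArcs {X : Type*} [PseudoMetricSpace X]
    [LocallyPathConnectedSpace X] {A B C Γ : Set X} (hΓcpt : IsCompact Γ)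
    (hΓ : IsPreconnected Γ) (hΓA : (Γ ∩ A).Nonempty) (hΓB : (Γ ∩ B).Nonempty)
    (hC : IsClosed C) (hcut : CutsArcs A B C) : (Γ ∩ C).Nonempty := by
  by_contra hΓC
  have hΓCc : Γ ⊆ Cᶜ := fun x hxΓ hxC => hΓC ⟨x, hxΓ, hxC⟩
  obtain ⟨δ, hδ, hδC⟩ := hΓcpt.exists_thickening_subset_open hC.isOpen_compl hΓCc
  obtain ⟨γ, h0, h1, hγ⟩ := hΓ.exists_path_subset_thickening hΓA hΓB hδ
  obtain ⟨x, hxγ, hxC⟩ := hcut.range_inter_nonempty γ h0 h1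
  exact hδC (hγ hxγ) hxC

theorem stmt4_general {X : Type*} [MetricSpace X] [LocallyPathConnectedSpace X]
    (A B : Set X)
    (Γ : Set X) (hΓcpt : IsCompact Γ) (hΓconn : IsConnected Γ)
    (hΓA : (Γ ∩ A).Nonempty) (hΓB : (Γ ∩ B).Nonempty) :
    (∀ ε : ℝ, 0 < ε → ∃ γ : C(unitInterval, X),
      γ 0 ∈ A ∧ γ 1 ∈ B ∧
      Set.range γ ⊆ {x : X | ∃ w ∈ Γ, dist x w < ε}) ∧
    (LocallyCompactSpace X → ∀ C : Set X, IsClosed C → CutsArcs A B C →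
      (Γ ∩ C).Nonempty) := by
  refine ⟨fun ε hε => ?_, fun _ C hC hcut =>
    hΓcpt.inter_nonempty_of_cutsArcs hΓconn.isPreconnected hΓA hΓB hC hcut⟩
  obtain ⟨γ, h0, h1, hγ⟩ := hΓconn.isPreconnected.exists_path_subset_thickening hΓA hΓB hε
  exact ⟨γ, h0, h1, fun x hx => mem_thickening_iff.mp (hγ hx)⟩

theorem stmt4 {X : Type*} [MetricSpace X] [ConnectedSpace X] [LocallyPathConnectedSpace X]
    (A B : Set X) (hA : IsClosed A) (hB : IsClosed B)
    (hAne : A.Nonempty) (hBne : B.Nonempty) (hAB : A ∩ B = ∅)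
    (Γ : Set X) (hΓcpt : IsCompact Γ) (hΓconn : IsConnected Γ)
    (hΓA : (Γ ∩ A).Nonempty) (hΓB : (Γ ∩ B).Nonempty) :
    (∀ ε : ℝ, 0 < ε → ∃ γ : C(unitInterval, X),
      γ 0 ∈ A ∧ γ 1 ∈ B ∧
      Set.range γ ⊆ {x : X | ∃ w ∈ Γ, dist x w < ε}) ∧
    (LocallyCompactSpace X → ∀ C : Set X, IsClosed C → CutsArcs A B C →
      (Γ ∩ C).Nonempty) :=
  stmt4_general A B Γ hΓcpt hΓconn hΓA hΓB
end

section
/- Assume there is a double sequence of oriented N-dimensional rectangles (X̃_k)_{k∈ℤ} of a metric space Z, with X̃_k = (X_k, X_k⁻), and a sequence ((D_k, ψ_k))_{k∈ℤ} with D_k ⊆ X_k such that (D_k, ψ_k) : X̃_k ⥲ X̃_{k+1} for all k ∈ ℤ. Then there is a sequence (w_k)_{k∈ℤ} such that w_k ∈ D_k and ψ_k(w_k) = w_{k+1} for all k ∈ ℤ. -/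
/-- The unit cube `[0,1]^N` in `ℝ^N`. -/
def unitCube (N : ℕ) : Set (Fin N → ℝ) := Set.Icc 0 1

/-- `(X, Xl ∪ Xr)` is an oriented `(n+1)`-dimensional rectangle of the metric
space `Z`: `X` is the image of the unit cube under a homeomorphism onto its image
(equivalently, a continuous injection on the compact cube), with `Xl` and `Xr`
the images of the two faces `x_N = 0` and `x_N = 1`. -/
def IsOrientedRect {Z : Type*} [TopologicalSpace Z] (n : ℕ) (X Xl Xr : Set Z) : Prop :=
  ∃ h : (Fin (n + 1) → ℝ) → Z,
    ContinuousOn h (unitCube (n + 1)) ∧ Set.InjOn h (unitCube (n + 1)) ∧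
    X = h '' unitCube (n + 1) ∧
    Xl = h '' {x ∈ unitCube (n + 1) | x (Fin.last n) = 0} ∧
    Xr = h '' {x ∈ unitCube (n + 1) | x (Fin.last n) = 1}

/-- `(D, K, ψ)` stretches the oriented rectangle `(X, Xl ∪ Xr)` to `(Y, Yl ∪ Yr)`
along the paths: `K ⊆ D` is compact, `ψ` is continuous on `K`, and every path in
`X` joining `Xl` and `Xr` has a sub-path with range in `K`, whose `ψ`-image is
contained in `Y` and meets both `Yl` and `Yr`. -/
def StretchesWith {Z : Type*} [TopologicalSpace Z]
    (X Xl Xr Y Yl Yr D K : Set Z) (ψ : Z → Z) : Prop :=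
  K ⊆ D ∧ IsCompact K ∧ ContinuousOn ψ K ∧
  ∀ γ : C(unitInterval, Z), Set.range γ ⊆ X →
    (Set.range γ ∩ Xl).Nonempty → (Set.range γ ∩ Xr).Nonempty →
    ∃ t₁ t₂ : unitInterval, t₁ ≤ t₂ ∧
      γ '' Set.Icc t₁ t₂ ⊆ K ∧
      ψ '' (γ '' Set.Icc t₁ t₂) ⊆ Y ∧
      (ψ '' (γ '' Set.Icc t₁ t₂) ∩ Yl).Nonempty ∧
      (ψ '' (γ '' Set.Icc t₁ t₂) ∩ Yr).Nonempty

/-- `(D, ψ)` stretches the oriented rectangle `(X, Xl ∪ Xr)` to `(Y, Yl ∪ Yr)`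
along the paths: there is a compact `K ⊆ D` witnessing the stretching. -/
def Stretches {Z : Type*} [TopologicalSpace Z]
    (X Xl Xr Y Yl Yr D : Set Z) (ψ : Z → Z) : Prop :=
  ∃ K : Set Z, StretchesWith X Xl Xr Y Yl Yr D K ψ

/-!
A path crossing `X_k` from `X_k,ℓ` to `X_k,r` has a sub-path in `K_k` whose `ψ_k`-image
crosses `X_{k+1}`; iterating from any crossing of `X_a` produces, for every finite window
`[a, a + M)`, a finite orbit segment with `w_k ∈ K_k`. The sets
`{w | w_k ∈ K_k, ψ_k(w_k) = w_{k+1}}` are closed, because `ψ_k` has compact graph over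
`K_k`, so by Tychonoff the finite intersection property yields a full orbit.
-/

open Set

section

variable {Z : Type*} [TopologicalSpace Z]

def IsCrossingPath (X Xl Xr : Set Z) (γ : C(unitInterval, Z)) : Prop :=
  range γ ⊆ X ∧ (range γ ∩ Xl).Nonempty ∧ (range γ ∩ Xr).Nonempty

theorem IsOrientedRect.exists_isCrossingPath {n : ℕ} {X Xl Xr : Set Z}
    (hX : IsOrientedRect n X Xl Xr) : ∃ γ, IsCrossingPath X Xl Xr γ := by
  obtain ⟨h, hcont, -, rfl, rfl, rfl⟩ := hX
  let p : unitInterval → Fin (n + 1) → ℝ := fun t => Pi.single (Fin.last n) (t : ℝ)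
  have hp : ∀ t, p t ∈ unitCube (n + 1) := fun t => by
    refine ⟨Pi.single_nonneg.mpr t.2.1, fun i => ?_⟩
    rcases eq_or_ne i (Fin.last n) with rfl | hi
    · simpa [p] using t.2.2
    · simp [p, hi]
  have hpc : Continuous p := (continuous_single _).comp continuous_subtype_val
  refine ⟨⟨h ∘ p, hcont.comp_continuous hpc hp⟩, ?_, ⟨h (p 0), mem_range_self 0, ?_⟩,
    ⟨h (p 1), mem_range_self 1, ?_⟩⟩
  · rintro - ⟨t, rfl⟩
    exact mem_image_of_mem h (hp t)
  · exact mem_image_of_mem h ⟨hp 0, by simp [p]⟩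
  · exact mem_image_of_mem h ⟨hp 1, by simp [p]⟩

namespace StretchesWith

variable {X Xl Xr Y Yl Yr D K : Set Z} {ψ : Z → Z} {γ : C(unitInterval, Z)}

theorem exists_isCrossingPath_image (hs : StretchesWith X Xl Xr Y Yl Yr D K ψ)
    (hγ : IsCrossingPath X Xl Xr γ) :
    ∃ γ', IsCrossingPath Y Yl Yr γ' ∧ range γ' ⊆ ψ '' (K ∩ range γ) := by
  obtain ⟨-, -, hψ, hcross⟩ := hs
  obtain ⟨t₁, t₂, h₁₂, hK, hY, hYl, hYr⟩ := hcross γ hγ.1 hγ.2.1 hγ.2.2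
  let c : unitInterval → unitInterval := fun s => projIcc t₁ t₂ h₁₂ s
  have hc : range c = Icc t₁ t₂ := by
    rw [show c = Subtype.val ∘ projIcc t₁ t₂ h₁₂ from rfl, range_comp,
      (projIcc_surjective h₁₂).range_eq, image_univ, Subtype.range_coe]
  have hcK : ∀ s, γ (c s) ∈ K := fun s => hK ⟨c s, hc ▸ mem_range_self s, rfl⟩
  let γ' : C(unitInterval, Z) := ⟨ψ ∘ γ ∘ c,
    hψ.comp_continuous (γ.continuous.comp (continuous_subtype_val.comp continuous_projIcc)) hcK⟩
  have hγ' : range γ' = ψ '' (γ '' Icc t₁ t₂) := by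
    rw [ContinuousMap.coe_mk, range_comp, range_comp, hc]
  refine ⟨γ', ?_, ?_⟩
  · rw [IsCrossingPath, hγ']
    exact ⟨hY, hYl, hYr⟩
  · rw [hγ']
    exact image_mono (subset_inter hK (image_subset_range γ _))

theorem inter_range_nonempty (hs : StretchesWith X Xl Xr Y Yl Yr D K ψ)
    (hγ : IsCrossingPath X Xl Xr γ) : (K ∩ range γ).Nonempty := by
  obtain ⟨γ', -, hγ'⟩ := hs.exists_isCrossingPath_image hγ
  exact image_nonempty.mp ⟨_, hγ' (mem_range_self 0)⟩

end StretchesWith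

theorem IsCompact.isClosed_setOf_mem_and_map_eq [T2Space Z] {α : Type*} [TopologicalSpace α]
    {K : Set Z} {ψ : Z → Z} (hK : IsCompact K) (hψ : ContinuousOn ψ K) {f g : α → Z}
    (hf : Continuous f) (hg : Continuous g) : IsClosed {a | f a ∈ K ∧ ψ (f a) = g a} := by
  have hgraph : IsClosed ((fun x => (x, ψ x)) '' K) :=
    (hK.image_of_continuousOn (continuousOn_id.prodMk hψ)).isClosed
  convert hgraph.preimage (hf.prodMk hg) using 1
  ext a
  simp only [mem_ofPred_eq, mem_preimage, mem_image, Prod.mk.injEq]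
  constructor
  · rintro ⟨ha, heq⟩
    exact ⟨f a, ha, rfl, heq⟩
  · rintro ⟨x, hx, rfl, heq⟩
    exact ⟨hx, heq⟩

theorem exists_orbit_of_forall_finset [T2Space Z] {K : ℤ → Set Z} {ψ : ℤ → Z → Z}
    (hK : ∀ k, IsCompact (K k)) (hψ : ∀ k, ContinuousOn (ψ k) (K k))
    (hfin : ∀ u : Finset ℤ, ∃ z ∈ univ.pi K, ∀ k ∈ u, ψ k (z k) = z (k + 1)) :
    ∃ w ∈ univ.pi K, ∀ k, ψ k (w k) = w (k + 1) := by
  let orbitStep (k : ℤ) : Set (ℤ → Z) := {z | z k ∈ K k ∧ ψ k (z k) = z (k + 1)}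
  have hclosed : ∀ k, IsClosed (orbitStep k) := fun k =>
    (hK k).isClosed_setOf_mem_and_map_eq (hψ k) (continuous_apply k) (continuous_apply _)
  obtain ⟨w, hwK, hw⟩ := (isCompact_univ_pi hK).inter_iInter_nonempty orbitStep hclosed
    fun u => by
      obtain ⟨z, hzK, hz⟩ := hfin u
      exact ⟨z, hzK, mem_iInter₂.mpr fun k hk => ⟨hzK k trivial, hz k hk⟩⟩
  exact ⟨w, hwK, fun k => (mem_iInter.mp hw k).2⟩

section Chains

variable {X Xl Xr D K : ℤ → Set Z} {ψ : ℤ → Z → Z}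

theorem exists_chain_Ico
    (hs : ∀ k, StretchesWith (X k) (Xl k) (Xr k) (X (k + 1)) (Xl (k + 1)) (Xr (k + 1))
      (D k) (K k) (ψ k))
    {d : ℤ → Z} (hd : d ∈ univ.pi K) (M : ℕ) {a : ℤ} {γ : C(unitInterval, Z)}
    (hγ : IsCrossingPath (X a) (Xl a) (Xr a) γ) :
    ∃ z ∈ univ.pi K, z a ∈ range γ ∧ ∀ k ∈ Ico a (a + M), ψ k (z k) = z (k + 1) := by
  induction M generalizing a γ with
  | zero =>
    obtain ⟨x, hxK, hxγ⟩ := (hs a).inter_range_nonempty hγ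
    refine ⟨Function.update d a x, (update_mem_pi_iff_of_mem hd).mpr fun _ => hxK, ?_, ?_⟩
    · rwa [Function.update_self]
    · intro k hk
      simp at hk
  | succ M ih =>
    obtain ⟨γ', hγ', himage⟩ := (hs a).exists_isCrossingPath_image hγ
    obtain ⟨z, hzK, hzγ', hz⟩ := ih hγ'
    obtain ⟨x, ⟨hxK, hxγ⟩, hxz⟩ := himage hzγ'
    refine ⟨Function.update z a x, (update_mem_pi_iff_of_mem hzK).mpr fun _ => hxK, ?_, ?_⟩
    · rwa [Function.update_self]
    · rintro k ⟨hak, hkM⟩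
      rw [Function.update_of_ne (show k + 1 ≠ a by omega)]
      rcases eq_or_ne k a with rfl | hka
      · rwa [Function.update_self]
      · rw [Function.update_of_ne hka]
        exact hz k ⟨by omega, by push_cast at hkM ⊢; omega⟩

theorem exists_chain_finset
    (hs : ∀ k, StretchesWith (X k) (Xl k) (Xr k) (X (k + 1)) (Xl (k + 1)) (Xr (k + 1))
      (D k) (K k) (ψ k))
    (hcross : ∀ k, ∃ γ, IsCrossingPath (X k) (Xl k) (Xr k) γ) (u : Finset ℤ) :
    ∃ z ∈ univ.pi K, ∀ k ∈ u, ψ k (z k) = z (k + 1) := by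
  choose γ hγ using hcross
  choose d hd using fun k => (hs k).inter_range_nonempty (hγ k)
  obtain ⟨N, hN⟩ : ∃ N : ℕ, ∀ k ∈ u, k.natAbs ≤ N := ⟨u.sup Int.natAbs, fun k => Finset.le_sup⟩
  obtain ⟨z, hzK, -, hz⟩ :=
    exists_chain_Ico hs (fun k _ => (hd k).1) (2 * N + 1) (hγ (-N))
  refine ⟨z, hzK, fun k hk => hz k ?_⟩
  have hkN := hN k hk
  constructor <;> push_cast <;> omega

end Chains

end

theorem stmt13_general {Z : Type*} [MetricSpace Z] {n : ℕ}
    (X Xl Xr D : ℤ → Set Z) (ψ : ℤ → Z → Z)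
    (hRect : ∀ k, IsOrientedRect n (X k) (Xl k) (Xr k))
    (hstretch : ∀ k, Stretches (X k) (Xl k) (Xr k)
      (X (k + 1)) (Xl (k + 1)) (Xr (k + 1)) (D k) (ψ k)) :
    ∃ w : ℤ → Z, ∀ k, w k ∈ D k ∧ ψ k (w k) = w (k + 1) := by
  choose K hK using hstretch
  obtain ⟨w, hwK, hw⟩ := exists_orbit_of_forall_finset (fun k => (hK k).2.1)
    (fun k => (hK k).2.2.1)
    (exists_chain_finset hK fun k => (hRect k).exists_isCrossingPath)
  exact ⟨w, fun k => ⟨(hK k).1 (hwK k trivial), hw k⟩⟩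

theorem stmt13 {Z : Type*} [MetricSpace Z] {n : ℕ}
    (X Xl Xr D : ℤ → Set Z) (ψ : ℤ → Z → Z)
    (hRect : ∀ k, IsOrientedRect n (X k) (Xl k) (Xr k))
    (hD : ∀ k, D k ⊆ X k)
    (hstretch : ∀ k, Stretches (X k) (Xl k) (Xr k)
      (X (k + 1)) (Xl (k + 1)) (Xr (k + 1)) (D k) (ψ k)) :
    ∃ w : ℤ → Z, ∀ k, w k ∈ D k ∧ ψ k (w k) = w (k + 1) :=
  stmt13_general X Xl Xr D ψ hRect hstretch
end

section
/- Assume there is a double sequence of oriented N-dimensional rectangles (X̃_k)_{k∈ℤ} of a metric space Z, with X̃_k = (X_k, X_k⁻) and X_k⁻ = X_ℓ^k ∪ X_r^k, and a sequence ((D_k, ψ_k))_{k∈ℤ} with D_k ⊆ X_k such that (D_k, ψ_k) : X̃_k ⥲ X̃_{k+1} for all k ∈ ℤ. Then for each j ∈ ℤ there exists a compact set S ⊆ D_j which cuts the arcs between X_ℓ^j and X_r^j in X_j and is such that for every w ∈ S there is a sequence (y_i)_{i≥j} with y_j = w, y_i ∈ D_i and ψ_i(y_i) = y_{i+1} for all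 i ≥ j. -/
/-- `C` cuts the arcs between `A` and `B` in `X` (subsets of the ambient space `Z`):
every path in `Z` with range contained in `X` whose range meets both `A` and `B`
has range meeting `C`. -/
def CutsArcsIn {Z : Type*} [TopologicalSpace Z] (X A B C : Set Z) : Prop :=
  ∀ γ : C(unitInterval, Z), Set.range γ ⊆ X →
    (Set.range γ ∩ A).Nonempty → (Set.range γ ∩ B).Nonempty →
    (Set.range γ ∩ C).Nonempty

/-!
Let `K k ⊆ D k` be the compact sets witnessing the stretchings and take for `S` the points whose
whole forward orbit from time `j` stays in the `K`'s. By continuity of `ψ k` on `K k`, the points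
whose first `m` iterates stay in the `K`'s form closed sets, so `S` is a closed subset of `K j`.
A path joining the faces of `X j` meets each of these sets: stretching gives a sub-path in `K j`
whose `ψ j`-image joins the faces of `X (j + 1)`, and one inducts on `m`. The traces of these
nested closed sets on the compact range of the path then have a common point, which lies in `S`.
-/

open Set

/-- The points whose orbit started at time `k` lies in `K k, …, K (k + m - 1)` for its first
`m` steps. -/
def stayingSet {Z : Type*} (K : ℤ → Set Z) (ψ : ℤ → Z → Z) : ℕ → ℤ → Set Z
  | 0, _ => univ
  | m + 1, k => K k ∩ ψ k ⁻¹' stayingSet K ψ m (k + 1)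

def trappedSet {Z : Type*} (K : ℤ → Set Z) (ψ : ℤ → Z → Z) (k : ℤ) : Set Z :=
  ⋂ m, stayingSet K ψ m k

section Staying

variable {Z : Type*} {K : ℤ → Set Z} {ψ : ℤ → Z → Z}

theorem stayingSet_succ_subset (m : ℕ) (k : ℤ) :
    stayingSet K ψ (m + 1) k ⊆ stayingSet K ψ m k := by
  induction m generalizing k with
  | zero => exact subset_univ _
  | succ m ih => exact inter_subset_inter_right _ (preimage_mono (ih (k + 1)))

theorem trappedSet_subset (k : ℤ) : trappedSet K ψ k ⊆ K k :=
  (iInter_subset _ 1).trans inter_subset_left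

theorem mapsTo_trappedSet (k : ℤ) : MapsTo (ψ k) (trappedSet K ψ k) (trappedSet K ψ (k + 1)) :=
  fun _ hz => mem_iInter.2 fun m => (mem_iInter.1 hz (m + 1)).2

variable [TopologicalSpace Z]

theorem isClosed_stayingSet (hK : ∀ k, IsClosed (K k)) (hψ : ∀ k, ContinuousOn (ψ k) (K k))
    (m : ℕ) (k : ℤ) : IsClosed (stayingSet K ψ m k) := by
  induction m generalizing k with
  | zero => exact isClosed_univ
  | succ m ih => exact (hψ k).preimage_isClosed_of_isClosed (hK k) (ih (k + 1))

theorem isCompact_trappedSet [T2Space Z] (hK : ∀ k, IsCompact (K k))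
    (hψ : ∀ k, ContinuousOn (ψ k) (K k)) (k : ℤ) : IsCompact (trappedSet K ψ k) :=
  (hK k).of_isClosed_subset
    (isClosed_iInter fun m => isClosed_stayingSet (fun k => (hK k).isClosed) hψ m k)
    (trappedSet_subset k)

variable {X Xl Xr D : ℤ → Set Z}

theorem nonempty_range_inter_stayingSet
    (hK : ∀ k, StretchesWith (X k) (Xl k) (Xr k) (X (k + 1)) (Xl (k + 1)) (Xr (k + 1))
      (D k) (K k) (ψ k))
    (m : ℕ) (k : ℤ) (γ : C(unitInterval, Z)) (hX : range γ ⊆ X k)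
    (hl : (range γ ∩ Xl k).Nonempty) (hr : (range γ ∩ Xr k).Nonempty) :
    (range γ ∩ stayingSet K ψ m k).Nonempty := by
  induction m generalizing k γ with
  | zero =>
    obtain ⟨z, hz, -⟩ := hl
    exact ⟨z, hz, mem_univ z⟩
  | succ m ih =>
    obtain ⟨-, -, hψ, hpaths⟩ := hK k
    obtain ⟨t₁, t₂, ht, hsubK, hsubX, hmeetl, hmeetr⟩ := hpaths γ hX hl hr
    let σ := (⟨γ, rfl, rfl⟩ : Path (γ 0) (γ 1)).subpath t₁ t₂
    have hσ : range σ = γ '' Icc t₁ t₂ := Path.range_subpath_of_le _ _ _ ht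
    let τ : C(unitInterval, Z) :=
      ⟨ψ k ∘ σ, hψ.comp_continuous σ.continuous fun t => hsubK (hσ ▸ mem_range_self t)⟩
    have hτ : range τ = ψ k '' (γ '' Icc t₁ t₂) := by rw [← hσ, ← range_comp]; rfl
    obtain ⟨_, ⟨t, rfl⟩, hτt⟩ := ih (k + 1) τ (hτ ▸ hsubX) (hτ ▸ hmeetl) (hτ ▸ hmeetr)
    obtain ⟨s, hs, hγs⟩ : σ t ∈ γ '' Icc t₁ t₂ := hσ ▸ mem_range_self t
    refine ⟨γ s, mem_range_self s, hsubK ⟨s, hs, rfl⟩, ?_⟩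
    rw [mem_preimage, hγs]
    exact hτt

theorem cutsArcsIn_trappedSet [T2Space Z]
    (hK : ∀ k, StretchesWith (X k) (Xl k) (Xr k) (X (k + 1)) (Xl (k + 1)) (Xr (k + 1))
      (D k) (K k) (ψ k))
    (k : ℤ) : CutsArcsIn (X k) (Xl k) (Xr k) (trappedSet K ψ k) := by
  intro γ hX hl hr
  have hγ : IsCompact (range γ) := isCompact_range γ.continuous
  have hclosed := isClosed_stayingSet (fun k => (hK k).2.1.isClosed) (fun k => (hK k).2.2.1)
  obtain ⟨z, hz⟩ := IsCompact.nonempty_iInter_of_sequence_nonempty_isCompact_isClosed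
    (fun m => range γ ∩ stayingSet K ψ m k)
    (fun m => inter_subset_inter_right _ (stayingSet_succ_subset m k))
    (fun m => nonempty_range_inter_stayingSet hK m k γ hX hl hr)
    (hγ.inter_right (hclosed 0 k)) (fun m => hγ.isClosed.inter (hclosed m k))
  exact ⟨z, (mem_iInter.1 hz 0).1, mem_iInter.2 fun m => (mem_iInter.1 hz m).2⟩

end Staying

theorem exists_orbit_of_mapsTo {Z : Type*} {S : ℤ → Set Z} {f : ℤ → Z → Z}
    (hf : ∀ k, MapsTo (f k) (S k) (S (k + 1))) {j : ℤ} {w : Z} (hw : w ∈ S j) :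
    ∃ y : ℤ → Z, y j = w ∧ ∀ i, j ≤ i → y i ∈ S i ∧ f i (y i) = y (i + 1) := by
  let orbit : ℕ → Z := fun n => Nat.rec w (fun n z => f (j + n) z) n
  have horbit : ∀ n : ℕ, orbit n ∈ S (j + n) := by
    intro n
    induction n with
    | zero => rw [Nat.cast_zero, add_zero]; exact hw
    | succ n ih => rw [Nat.cast_succ, ← add_assoc]; exact hf _ ih
  refine ⟨fun i => orbit (i - j).toNat, by simp [orbit], fun i hi => ?_⟩
  obtain ⟨n, rfl⟩ := Int.le.dest hi
  have hn : (j + n - j).toNat = n := by omega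
  have hsucc : (j + n + 1 - j).toNat = n + 1 := by omega
  simp only [hn, hsucc]
  exact ⟨horbit n, rfl⟩

theorem stmt15_general {Z : Type*} [MetricSpace Z]
    (X Xl Xr D : ℤ → Set Z) (ψ : ℤ → Z → Z)
    (hstretch : ∀ k, Stretches (X k) (Xl k) (Xr k)
      (X (k + 1)) (Xl (k + 1)) (Xr (k + 1)) (D k) (ψ k)) :
    ∀ j : ℤ, ∃ S : Set Z, IsCompact S ∧ S ⊆ D j ∧
      CutsArcsIn (X j) (Xl j) (Xr j) S ∧
      ∀ w ∈ S, ∃ y : ℤ → Z, y j = w ∧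
        ∀ i, j ≤ i → y i ∈ D i ∧ ψ i (y i) = y (i + 1) := by
  intro j
  choose K hK using hstretch
  have hKD : ∀ k, trappedSet K ψ k ⊆ D k := fun k => (trappedSet_subset k).trans (hK k).1
  refine ⟨trappedSet K ψ j, isCompact_trappedSet (fun k => (hK k).2.1) (fun k => (hK k).2.2.1) j,
    hKD j, cutsArcsIn_trappedSet hK j, fun w hw => ?_⟩
  obtain ⟨y, hyj, hy⟩ := exists_orbit_of_mapsTo mapsTo_trappedSet hw
  exact ⟨y, hyj, fun i hi => ⟨hKD i (hy i hi).1, (hy i hi).2⟩⟩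

theorem stmt15 {Z : Type*} [MetricSpace Z] {n : ℕ}
    (X Xl Xr D : ℤ → Set Z) (ψ : ℤ → Z → Z)
    (hRect : ∀ k, IsOrientedRect n (X k) (Xl k) (Xr k))
    (hD : ∀ k, D k ⊆ X k)
    (hstretch : ∀ k, Stretches (X k) (Xl k) (Xr k)
      (X (k + 1)) (Xl (k + 1)) (Xr (k + 1)) (D k) (ψ k)) :
    ∀ j : ℤ, ∃ S : Set Z, IsCompact S ∧ S ⊆ D j ∧
      CutsArcsIn (X j) (Xl j) (Xr j) S ∧
      ∀ w ∈ S, ∃ y : ℤ → Z, y j = w ∧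
        ∀ i, j ≤ i → y i ∈ D i ∧ ψ i (y i) = y (i + 1) :=
  stmt15_general X Xl Xr D ψ hstretch
end
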